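/- arXiv:2506.20820 — 6 statements merged into one kernel-verified Lean document; each statement's English description precedes it below -/
import Mathlib

section
/- Let s ≡ 1 (mod 4) be square-free with s ≥ 13 and 7 ∤ s, and let K = Q(√7, √s) with ring of integers O_K having integral basis (1, √7, (1+√s)/2, (√7+√(7s))/2). Suppose integers a_i, b_i, c_i, d_i (finitely many nonzero) satisfy a_i ≡ c_i (mod 2) and b_i ≡ d_i (mod 2) for all i, together with Σ a_i² + 7 Σ b_i² + s Σ c_i² + 7s Σ d_i² = 54 + 2s, Σ a_i b_i + s Σ c_i d_i = 4, Σ a_i c_i + 7 Σ b_i d_i = 4, and Σ a_i d_i + Σ b_i c_i = 0. Then all d_i = 0. -/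
open scoped Classical

theorem m7_s1_d_vanishes (s : ℤ) (hs4 : s % 4 = 1) (hsf : Squarefree s)
    (hs13 : 13 ≤ s) (h7 : ¬ (7 ∣ s))
    (a b c d : ℕ → ℤ)
    (hfa : (Function.support a).Finite) (hfb : (Function.support b).Finite)
    (hfc : (Function.support c).Finite) (hfd : (Function.support d).Finite)
    (hpar : ∀ i, a i % 2 = c i % 2 ∧ b i % 2 = d i % 2)
    (e1 : ∑ᶠ i, (a i) ^ 2 + 7 * ∑ᶠ i, (b i) ^ 2 + s * ∑ᶠ i, (c i) ^ 2
        + 7 * s * ∑ᶠ i, (d i) ^ 2 = 54 + 2 * s)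
    (e2 : ∑ᶠ i, a i * b i + s * ∑ᶠ i, c i * d i = 4)
    (e3 : ∑ᶠ i, a i * c i + 7 * ∑ᶠ i, b i * d i = 4)
    (e4 : ∑ᶠ i, a i * d i + ∑ᶠ i, b i * c i = 0) :
    ∀ i, d i = 0 := by
  have hsq : ∀ f : ℕ → ℤ, (Function.support f).Finite →
      (Function.support (fun i => f i ^ 2)).Finite := by
    intro f hf
    apply hf.subset
    intro i hi
    simp only [Function.mem_support] at hi ⊢
    intro h; apply hi; rw [h]; ring
  have hA : 0 ≤ ∑ᶠ i, (a i) ^ 2 := finsum_nonneg fun i => sq_nonneg _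
  have hB : 0 ≤ ∑ᶠ i, (b i) ^ 2 := finsum_nonneg fun i => sq_nonneg _
  have hC : 0 ≤ ∑ᶠ i, (c i) ^ 2 := finsum_nonneg fun i => sq_nonneg _
  intro i
  by_contra hdi
  have h1 : 1 ≤ (d i) ^ 2 := by
    have := sq_nonneg (d i)
    rcases lt_or_gt_of_ne hdi with h | h <;> nlinarith
  have hle : (d i) ^ 2 ≤ ∑ᶠ j, (d j) ^ 2 :=
    single_le_finsum i (hsq d hfd) fun j => sq_nonneg _
  nlinarith [hle, h1]
end

section
/- Let s ≥ 13 be an integer. Suppose integers a_i, b_i, c_i, d_i (finitely many nonzero) satisfy: d_i = 0 for all i, b_i even for all i, a_i ≡ c_i (mod 2), Σ a_i² + 7 Σ b_i² + s Σ c_i² = 54 + 2s, Σ a_i b_i = 4, Σ a_i c_i = 4, and Σ b_i c_i = 0. Then Σ c_i² = 2, Σ a_i² = 26, and Σ b_i² = 4. -/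
open scoped Classical

theorem m7_s1_core_counts (s : ℤ) (hs13 : 13 ≤ s)
    (a b c : ℕ → ℤ)
    (hfa : (Function.support a).Finite) (hfb : (Function.support b).Finite)
    (hfc : (Function.support c).Finite)
    (hbeven : ∀ i, 2 ∣ b i)
    (hpar : ∀ i, a i % 2 = c i % 2)
    (e1 : ∑ᶠ i, (a i) ^ 2 + 7 * ∑ᶠ i, (b i) ^ 2 + s * ∑ᶠ i, (c i) ^ 2 = 54 + 2 * s)
    (e2 : ∑ᶠ i, a i * b i = 4)
    (e3 : ∑ᶠ i, a i * c i = 4)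
    (e4 : ∑ᶠ i, b i * c i = 0) :
    ∑ᶠ i, (c i) ^ 2 = 2 ∧ ∑ᶠ i, (a i) ^ 2 = 26 ∧ ∑ᶠ i, (b i) ^ 2 = 4 := by
  classical
  set S : Finset ℕ := hfa.toFinset ∪ hfb.toFinset ∪ hfc.toFinset with hSdef
  have hmem : ∀ i : ℕ, i ∉ S → a i = 0 ∧ b i = 0 ∧ c i = 0 := by
    intro i hi
    simp only [hSdef, Finset.mem_union, Set.Finite.mem_toFinset,
      Function.mem_support, not_or, not_not] at hi
    exact ⟨hi.1.1, hi.1.2, hi.2⟩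
  have key : ∀ f : ℕ → ℤ, (∀ i, i ∉ S → f i = 0) → ∑ᶠ i, f i = ∑ i ∈ S, f i := by
    intro f hf
    refine finsum_eq_sum_of_support_subset f ?_
    intro i hi
    simp only [Function.mem_support] at hi
    by_contra h
    exact hi (hf i h)
  have ea : ∑ᶠ i, (a i) ^ 2 = ∑ i ∈ S, (a i) ^ 2 := key _ fun i hi => by
    rw [(hmem i hi).1]; ring
  have eb : ∑ᶠ i, (b i) ^ 2 = ∑ i ∈ S, (b i) ^ 2 := key _ fun i hi => by
    rw [(hmem i hi).2.1]; ring
  have ec : ∑ᶠ i, (c i) ^ 2 = ∑ i ∈ S, (c i) ^ 2 := key _ fun i hi => by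
    rw [(hmem i hi).2.2]; ring
  have eab : ∑ᶠ i, a i * b i = ∑ i ∈ S, a i * b i := key _ fun i hi => by
    rw [(hmem i hi).1]; ring
  have eac : ∑ᶠ i, a i * c i = ∑ i ∈ S, a i * c i := key _ fun i hi => by
    rw [(hmem i hi).1]; ring
  rw [ea, eb, ec] at e1 ⊢
  rw [eab] at e2
  rw [eac] at e3
  set A := ∑ i ∈ S, (a i) ^ 2 with hA
  set B := ∑ i ∈ S, (b i) ^ 2 with hB
  set C := ∑ i ∈ S, (c i) ^ 2 with hC
  have hA0 : 0 ≤ A := Finset.sum_nonneg fun i _ => sq_nonneg _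
  have hB0 : 0 ≤ B := Finset.sum_nonneg fun i _ => sq_nonneg _
  have hC0 : 0 ≤ C := Finset.sum_nonneg fun i _ => sq_nonneg _
  have hB4 : (4 : ℤ) ∣ B := Finset.dvd_sum fun i _ => by
    obtain ⟨k, hk⟩ := hbeven i
    exact ⟨k ^ 2, by rw [hk]; ring⟩
  -- parity: A even
  have hApar : (2 : ℤ) ∣ (A - 4) := by
    rw [← e3, ← Finset.sum_sub_distrib]
    refine Finset.dvd_sum fun i _ => ?_
    have h2 : (2 : ℤ) ∣ (a i - c i) := by have := hpar i; omega
    obtain ⟨k, hk⟩ := h2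
    exact ⟨a i * k, by linear_combination a i * hk⟩
  have hCpar : (2 : ℤ) ∣ (C - 4) := by
    rw [← e3, ← Finset.sum_sub_distrib]
    refine Finset.dvd_sum fun i _ => ?_
    have h2 : (2 : ℤ) ∣ (c i - a i) := by have := hpar i; omega
    obtain ⟨k, hk⟩ := h2
    exact ⟨c i * k, by linear_combination c i * hk⟩
  -- B ≠ 0
  have hBne : B ≠ 0 := by
    intro h
    have hz : ∀ i ∈ S, (b i) ^ 2 = 0 :=
      (Finset.sum_eq_zero_iff_of_nonneg fun i _ => sq_nonneg _).1 h
    have : ∑ i ∈ S, a i * b i = 0 := Finset.sum_eq_zero fun i hi => by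
      have : b i = 0 := by have := hz i hi; nlinarith [sq_nonneg (b i)]
      rw [this]; ring
    omega
  have hAne : A ≠ 0 := by
    intro h
    have hz : ∀ i ∈ S, (a i) ^ 2 = 0 :=
      (Finset.sum_eq_zero_iff_of_nonneg fun i _ => sq_nonneg _).1 h
    have : ∑ i ∈ S, a i * c i = 0 := Finset.sum_eq_zero fun i hi => by
      have : a i = 0 := by have := hz i hi; nlinarith [sq_nonneg (a i)]
      rw [this]; ring
    omega
  have hCne : C ≠ 0 := by
    intro h
    have hz : ∀ i ∈ S, (c i) ^ 2 = 0 :=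
      (Finset.sum_eq_zero_iff_of_nonneg fun i _ => sq_nonneg _).1 h
    have : ∑ i ∈ S, a i * c i = 0 := Finset.sum_eq_zero fun i hi => by
      have : c i = 0 := by have := hz i hi; nlinarith [sq_nonneg (c i)]
      rw [this]; ring
    omega
  have hBge : 4 ≤ B := by omega
  have hAge : 1 ≤ A := by omega
  -- C ≤ 4
  have hC4 : C ≤ 4 := by
    by_contra h
    push_neg at h
    have h5 : 5 * s ≤ s * C := by nlinarith
    linarith
  have hCcase : C = 2 ∨ C = 4 := by omega
  obtain hC2 | hC4' := hCcase
  · rw [hC2] at e1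
    exact ⟨hC2, by omega, by omega⟩
  · rw [hC4'] at e1
    omega
end

section
/- Let s ≡ 3 (mod 4) be square-free with s ≥ 15 and 7 ∤ s. Suppose integers a_i, b_i, c_i, d_i (finitely many nonzero) satisfy a_i ≡ d_i (mod 2) and b_i ≡ c_i (mod 2), together with Σ a_i² + 7 Σ b_i² + s Σ c_i² + 7s Σ d_i² = 62 + 2s, Σ a_i b_i + s Σ c_i d_i = 6, Σ a_i c_i + 7 Σ b_i d_i = 2, and Σ a_i d_i + Σ b_i c_i = 2. Then d_i = 0 for all i and Σ c_i² = 2. -/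
open scoped Classical

private lemma finsum_sq_eq (f : ℕ → ℤ) (T : Finset ℕ) (h : Function.support f ⊆ ↑T) :
    ∑ᶠ i, f i ^ 2 = ∑ i ∈ T, f i ^ 2 := by
  refine finsum_eq_sum_of_support_subset _ (subset_trans ?_ h)
  intro i hi
  simp only [Function.mem_support] at hi ⊢
  intro h0; exact hi (by simp [h0])

private lemma finsum_mul_eq (f g : ℕ → ℤ) (T : Finset ℕ) (h : Function.support f ⊆ ↑T) :
    ∑ᶠ i, f i * g i = ∑ i ∈ T, f i * g i := by
  refine finsum_eq_sum_of_support_subset _ (subset_trans ?_ h)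
  intro i hi
  simp only [Function.mem_support] at hi ⊢
  intro h0; exact hi (by simp [h0])

theorem m7_s3_d_zero_c_two (s : ℤ) (hs4 : s % 4 = 3) (hsf : Squarefree s)
    (hs15 : 15 ≤ s) (h7 : ¬ (7 ∣ s))
    (a b c d : ℕ → ℤ)
    (hfa : (Function.support a).Finite) (hfb : (Function.support b).Finite)
    (hfc : (Function.support c).Finite) (hfd : (Function.support d).Finite)
    (hpar : ∀ i, a i % 2 = d i % 2 ∧ b i % 2 = c i % 2)
    (e1 : ∑ᶠ i, (a i) ^ 2 + 7 * ∑ᶠ i, (b i) ^ 2 + s * ∑ᶠ i, (c i) ^ 2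
        + 7 * s * ∑ᶠ i, (d i) ^ 2 = 62 + 2 * s)
    (e2 : ∑ᶠ i, a i * b i + s * ∑ᶠ i, c i * d i = 6)
    (e3 : ∑ᶠ i, a i * c i + 7 * ∑ᶠ i, b i * d i = 2)
    (e4 : ∑ᶠ i, a i * d i + ∑ᶠ i, b i * c i = 2) :
    (∀ i, d i = 0) ∧ ∑ᶠ i, (c i) ^ 2 = 2 := by
  classical
  set T : Finset ℕ := hfa.toFinset ∪ hfb.toFinset ∪ hfc.toFinset ∪ hfd.toFinset with hT
  have hta : Function.support a ⊆ ↑T := by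
    intro i hi
    simp only [hT, Finset.coe_union, Set.mem_union, Set.Finite.coe_toFinset]
    tauto
  have htb : Function.support b ⊆ ↑T := by
    intro i hi
    simp only [hT, Finset.coe_union, Set.mem_union, Set.Finite.coe_toFinset]
    tauto
  have htc : Function.support c ⊆ ↑T := by
    intro i hi
    simp only [hT, Finset.coe_union, Set.mem_union, Set.Finite.coe_toFinset]
    tauto
  have htd : Function.support d ⊆ ↑T := by
    intro i hi
    simp only [hT, Finset.coe_union, Set.mem_union, Set.Finite.coe_toFinset]
    tauto
  rw [finsum_sq_eq a T hta, finsum_sq_eq b T htb, finsum_sq_eq c T htc,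
    finsum_sq_eq d T htd] at e1
  rw [finsum_mul_eq a b T hta, finsum_mul_eq c d T htc] at e2
  rw [finsum_mul_eq a c T hta, finsum_mul_eq b d T htb] at e3
  rw [finsum_mul_eq a d T hta, finsum_mul_eq b c T htb] at e4
  rw [finsum_sq_eq c T htc]
  set A := ∑ i ∈ T, a i ^ 2 with hA
  set B := ∑ i ∈ T, b i ^ 2 with hB
  set C := ∑ i ∈ T, c i ^ 2 with hC
  set D := ∑ i ∈ T, d i ^ 2 with hD
  have hA0 : 0 ≤ A := Finset.sum_nonneg fun i _ => sq_nonneg _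
  have hB0 : 0 ≤ B := Finset.sum_nonneg fun i _ => sq_nonneg _
  have hC0 : 0 ≤ C := Finset.sum_nonneg fun i _ => sq_nonneg _
  have hD0 : 0 ≤ D := Finset.sum_nonneg fun i _ => sq_nonneg _
  -- D = 0
  have hsC : 0 ≤ s * C := mul_nonneg (by linarith) hC0
  have hDz : D = 0 := by
    by_contra h
    have hD1 : 1 ≤ D := by omega
    nlinarith
  have hd : ∀ i, d i = 0 := by
    intro i
    by_cases hmem : i ∈ T
    · have := (Finset.sum_eq_zero_iff_of_nonneg (fun i _ => sq_nonneg (d i))).mp hDz i hmem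
      exact pow_eq_zero_iff (by norm_num) |>.mp this
    · by_contra hne
      exact hmem (Finset.mem_coe.mp (htd (Function.mem_support.mpr hne)))
  refine ⟨hd, ?_⟩
  -- kill d-sums
  have hcd : ∑ i ∈ T, c i * d i = 0 := Finset.sum_eq_zero fun i _ => by rw [hd i, mul_zero]
  have hbd : ∑ i ∈ T, b i * d i = 0 := Finset.sum_eq_zero fun i _ => by rw [hd i, mul_zero]
  have had : ∑ i ∈ T, a i * d i = 0 := Finset.sum_eq_zero fun i _ => by rw [hd i, mul_zero]
  rw [hcd, mul_zero, add_zero] at e2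
  rw [hbd, mul_zero, add_zero] at e3
  rw [had, zero_add] at e4
  rw [hDz, mul_zero, add_zero] at e1
  -- A divisible by 4
  have hA4 : (4:ℤ) ∣ A := by
    refine Finset.dvd_sum fun i _ => ?_
    have hp := (hpar i).1
    have hdi := hd i
    have : (2:ℤ) ∣ a i := by omega
    obtain ⟨k, hk⟩ := this
    exact ⟨k ^ 2, by rw [hk]; ring⟩
  -- B ≡ C mod 4
  have hBC : (4:ℤ) ∣ (B - C) := by
    rw [hB, hC, ← Finset.sum_sub_distrib]
    refine Finset.dvd_sum fun i _ => ?_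
    have hp := (hpar i).2
    have : (2:ℤ) ∣ (b i - c i) := by omega
    obtain ⟨k, hk⟩ := this
    have hb : b i = c i + 2 * k := by linarith
    exact ⟨k * c i + k ^ 2, by rw [hb]; ring⟩
  -- C is even
  obtain ⟨k, hk⟩ := hA4
  obtain ⟨m, hm⟩ := hBC
  obtain ⟨t, ht⟩ : ∃ t, s = 4 * t + 3 := ⟨s / 4, by omega⟩
  have hCeven : C % 2 = 0 := by
    have hBm : B = C + 4 * m := by linarith
    have key : 4 * (k + 7 * m + t * C) + 10 * C = 68 + 8 * t := by
      rw [hk, hBm, ht] at e1; linear_combination e1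
    generalize (k + 7 * m + t * C) = w at key
    omega
  -- C ≤ 6
  have hC6 : C ≤ 6 := by
    by_contra h
    have h7C : 7 ≤ C := by omega
    nlinarith
  -- Cauchy-Schwarz for a,b
  have hCS : (∑ i ∈ T, a i * b i) ^ 2 ≤ A * B :=
    Finset.sum_mul_sq_le_sq_mul_sq T a b
  rw [e2] at hCS
  -- case analysis on C
  interval_cases C
  · -- C = 0: all c = 0, contradicts e4
    exfalso
    have hc : ∀ i ∈ T, c i = 0 := fun i hi => by
      have := (Finset.sum_eq_zero_iff_of_nonneg (fun i _ => sq_nonneg (c i))).mp hC.symm i hi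
      exact pow_eq_zero_iff (by norm_num) |>.mp this
    have : ∑ i ∈ T, b i * c i = 0 := Finset.sum_eq_zero fun i hi => by rw [hc i hi, mul_zero]
    omega
  · omega
  · rfl
  · omega
  · -- C = 4
    exfalso
    have hAB : A + 7 * B = 62 - 2 * s := by linarith
    have hB4 : (4:ℤ) ∣ B := by omega
    have hBle : B ≤ 4 := by omega
    have hB04 : B = 0 ∨ B = 4 := by omega
    rcases hB04 with h0 | h4
    · rw [h0, mul_zero] at hCS; linarith
    · have hAle : A ≤ 4 := by omega
      rw [h4] at hCS; nlinarith
  · omega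
  · -- C = 6
    exfalso
    omega
end

section
/- Let z ≡ 1 (mod 4) with z ≥ 59, z odd and square-free, 3 ∤ z, and set s = 2z. Suppose integers a_i, b_i, c_i, d_i (finitely many nonzero) satisfy a_i ≡ d_i ≡ 0 (mod 2) and b_i ≡ c_i (mod 2), together with Σ a_i² + 6 Σ b_i² + 2z Σ c_i² + 3z Σ d_i² = 56 + 4z, Σ a_i b_i + z Σ c_i d_i = 6, Σ a_i c_i + 3 Σ b_i d_i = 2, and Σ a_i d_i + 2 Σ b_i c_i = 4. Then d_i = 0 for all i, Σ c_i² = 2, Σ a_i² = 20, and Σ b_i² = 6. -/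
open scoped Classical

set_option maxHeartbeats 1000000

theorem m6_s2_za_core (z : ℤ) (hz4 : z % 4 = 1) (hz59 : 59 ≤ z) (hzodd : Odd z)
    (hzsf : Squarefree z) (h3 : ¬ (3 ∣ z))
    (a b c d : ℕ → ℤ)
    (hfa : (Function.support a).Finite) (hfb : (Function.support b).Finite)
    (hfc : (Function.support c).Finite) (hfd : (Function.support d).Finite)
    (haeven : ∀ i, 2 ∣ a i) (hdeven : ∀ i, 2 ∣ d i)
    (hpar : ∀ i, b i % 2 = c i % 2)
    (e1 : ∑ᶠ i, (a i) ^ 2 + 6 * ∑ᶠ i, (b i) ^ 2 + 2 * z * ∑ᶠ i, (c i) ^ 2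
        + 3 * z * ∑ᶠ i, (d i) ^ 2 = 56 + 4 * z)
    (e2 : ∑ᶠ i, a i * b i + z * ∑ᶠ i, c i * d i = 6)
    (e3 : ∑ᶠ i, a i * c i + 3 * ∑ᶠ i, b i * d i = 2)
    (e4 : ∑ᶠ i, a i * d i + 2 * ∑ᶠ i, b i * c i = 4) :
    (∀ i, d i = 0) ∧ ∑ᶠ i, (c i) ^ 2 = 2 ∧ ∑ᶠ i, (a i) ^ 2 = 20 ∧
      ∑ᶠ i, (b i) ^ 2 = 6 := by
  set S : Finset ℕ := hfa.toFinset ∪ hfb.toFinset ∪ hfc.toFinset ∪ hfd.toFinset with hS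
  have haS : Function.support a ⊆ (S : Set ℕ) := by
    intro i hi
    simp [hS, Set.Finite.mem_toFinset, hi]
  have hbS : Function.support b ⊆ (S : Set ℕ) := by
    intro i hi
    simp [hS, Set.Finite.mem_toFinset, hi]
  have hcS : Function.support c ⊆ (S : Set ℕ) := by
    intro i hi
    simp [hS, Set.Finite.mem_toFinset, hi]
  have hdS : Function.support d ⊆ (S : Set ℕ) := by
    intro i hi
    simp [hS, Set.Finite.mem_toFinset, hi]
  -- rewrite all finsums as Finset sums over S
  have sq_sub : ∀ (f : ℕ → ℤ), Function.support f ⊆ (S : Set ℕ) →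
      Function.support (fun i => f i ^ 2) ⊆ (S : Set ℕ) := by
    intro f hf i hi
    apply hf
    intro h0
    simp [Function.mem_support, h0] at hi
  have mul_sub : ∀ (f g : ℕ → ℤ), Function.support f ⊆ (S : Set ℕ) →
      Function.support (fun i => f i * g i) ⊆ (S : Set ℕ) := by
    intro f g hf i hi
    apply hf
    intro h0
    simp [Function.mem_support, h0] at hi
  have hA : ∑ᶠ i, (a i) ^ 2 = ∑ i ∈ S, (a i) ^ 2 :=
    finsum_eq_sum_of_support_subset _ (sq_sub a haS)
  have hB : ∑ᶠ i, (b i) ^ 2 = ∑ i ∈ S, (b i) ^ 2 :=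
    finsum_eq_sum_of_support_subset _ (sq_sub b hbS)
  have hC : ∑ᶠ i, (c i) ^ 2 = ∑ i ∈ S, (c i) ^ 2 :=
    finsum_eq_sum_of_support_subset _ (sq_sub c hcS)
  have hD : ∑ᶠ i, (d i) ^ 2 = ∑ i ∈ S, (d i) ^ 2 :=
    finsum_eq_sum_of_support_subset _ (sq_sub d hdS)
  have hab : ∑ᶠ i, a i * b i = ∑ i ∈ S, a i * b i :=
    finsum_eq_sum_of_support_subset _ (mul_sub a b haS)
  have hcd : ∑ᶠ i, c i * d i = ∑ i ∈ S, c i * d i :=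
    finsum_eq_sum_of_support_subset _ (mul_sub c d hcS)
  have hac : ∑ᶠ i, a i * c i = ∑ i ∈ S, a i * c i :=
    finsum_eq_sum_of_support_subset _ (mul_sub a c haS)
  have hbd : ∑ᶠ i, b i * d i = ∑ i ∈ S, b i * d i :=
    finsum_eq_sum_of_support_subset _ (mul_sub b d hbS)
  have had : ∑ᶠ i, a i * d i = ∑ i ∈ S, a i * d i :=
    finsum_eq_sum_of_support_subset _ (mul_sub a d haS)
  have hbc : ∑ᶠ i, b i * c i = ∑ i ∈ S, b i * c i :=
    finsum_eq_sum_of_support_subset _ (mul_sub b c hbS)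
  rw [hA, hB, hC, hD] at e1
  rw [hab, hcd] at e2
  rw [hac, hbd] at e3
  rw [had, hbc] at e4
  set A := ∑ i ∈ S, (a i) ^ 2 with hAdef
  set B := ∑ i ∈ S, (b i) ^ 2 with hBdef
  set C := ∑ i ∈ S, (c i) ^ 2 with hCdef
  set D := ∑ i ∈ S, (d i) ^ 2 with hDdef
  have hA0 : 0 ≤ A := Finset.sum_nonneg fun i _ => sq_nonneg _
  have hB0 : 0 ≤ B := Finset.sum_nonneg fun i _ => sq_nonneg _
  have hC0 : 0 ≤ C := Finset.sum_nonneg fun i _ => sq_nonneg _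
  have hD0 : 0 ≤ D := Finset.sum_nonneg fun i _ => sq_nonneg _
  have hA4 : (4 : ℤ) ∣ A := by
    apply Finset.dvd_sum
    intro i _
    obtain ⟨k, hk⟩ := haeven i
    exact ⟨k ^ 2, by rw [hk]; ring⟩
  have hD4 : (4 : ℤ) ∣ D := by
    apply Finset.dvd_sum
    intro i _
    obtain ⟨k, hk⟩ := hdeven i
    exact ⟨k ^ 2, by rw [hk]; ring⟩
  have hbc2 : ∀ i, (2 : ℤ) ∣ (b i - c i) := by
    intro i
    exact Int.ModEq.dvd (Int.ModEq.symm (hpar i))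
  -- D = 0
  have hDlt : D < 4 := by nlinarith
  have hDz : D = 0 := by omega
  have hd0 : ∀ i, d i = 0 := by
    intro i
    by_cases hi : i ∈ S
    · have := (Finset.sum_eq_zero_iff_of_nonneg (fun j _ => sq_nonneg (d j))).mp hDz i hi
      exact sq_eq_zero_iff.mp this
    · by_contra h0
      exact hi (hdS h0)
  have hcd0 : ∑ i ∈ S, c i * d i = 0 :=
    Finset.sum_eq_zero fun i _ => by rw [hd0 i, mul_zero]
  have hbd0 : ∑ i ∈ S, b i * d i = 0 :=
    Finset.sum_eq_zero fun i _ => by rw [hd0 i, mul_zero]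
  have had0 : ∑ i ∈ S, a i * d i = 0 :=
    Finset.sum_eq_zero fun i _ => by rw [hd0 i, mul_zero]
  rw [hcd0, mul_zero, add_zero] at e2
  rw [hbd0, mul_zero, add_zero] at e3
  rw [had0, zero_add] at e4
  have hPbc : ∑ i ∈ S, b i * c i = 2 := by linarith
  -- C is even
  have hCe : (2 : ℤ) ∣ (∑ i ∈ S, b i * c i) - C := by
    rw [hCdef, ← Finset.sum_sub_distrib]
    apply Finset.dvd_sum
    intro i _
    have : b i * c i - c i ^ 2 = (b i - c i) * c i := by ring
    rw [this]
    exact Dvd.dvd.mul_right (hbc2 i) _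
  have hC2 : (2 : ℤ) ∣ C := by
    rw [hPbc] at hCe
    omega
  -- B ≡ C mod 4
  have hBC : (4 : ℤ) ∣ B - C := by
    rw [hBdef, hCdef, ← Finset.sum_sub_distrib]
    apply Finset.dvd_sum
    intro i _
    obtain ⟨k, hk⟩ := hbc2 i
    have hb : b i = c i + 2 * k := by linarith
    exact ⟨k * c i + k ^ 2, by rw [hb]; ring⟩
  -- C < 3
  have hClt : C < 3 := by nlinarith
  -- C ≠ 0
  have hCne : C ≠ 0 := by
    intro h0
    have hcz : ∀ i ∈ S, c i = 0 := by
      intro i hi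
      exact sq_eq_zero_iff.mp ((Finset.sum_eq_zero_iff_of_nonneg (fun j _ => sq_nonneg (c j))).mp h0 i hi)
    have : ∑ i ∈ S, a i * c i = 0 :=
      Finset.sum_eq_zero fun i hi => by rw [hcz i hi, mul_zero]
    omega
  have hCeq : C = 2 := by omega
  -- A + 6B = 56
  have hAB : A + 6 * B = 56 := by
    rw [hCeq, hDz] at e1
    linarith
  -- the (b-c)^2 sum
  have hkey : ∑ i ∈ S, (b i - c i) ^ 2 = B - 2 * (∑ i ∈ S, b i * c i) + C := by
    rw [hBdef, hCdef, Finset.mul_sum, ← Finset.sum_sub_distrib, ← Finset.sum_add_distrib]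
    apply Finset.sum_congr rfl
    intro i _
    ring
  rw [hPbc, hCeq] at hkey
  have hBne2 : B ≠ 2 := by
    intro h2
    have h0 : ∑ i ∈ S, (b i - c i) ^ 2 = 0 := by rw [hkey, h2]; ring
    have hbceq : ∀ i ∈ S, b i = c i := by
      intro i hi
      have := sq_eq_zero_iff.mp ((Finset.sum_eq_zero_iff_of_nonneg (fun j _ => sq_nonneg (b j - c j))).mp h0 i hi)
      linarith
    have : ∑ i ∈ S, a i * b i = ∑ i ∈ S, a i * c i :=
      Finset.sum_congr rfl fun i hi => by rw [hbceq i hi]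
    omega
  have hBeq : B = 6 := by omega
  have hAeq : A = 20 := by omega
  refine ⟨hd0, ?_, ?_, ?_⟩
  · rw [hC]; exact hCeq
  · rw [hA]; exact hAeq
  · rw [hB]; exact hBeq
end

section
/- Let s ≡ 3 (mod 4) be square-free with s ≥ 19 and 3 ∤ s. Suppose integers a_i, b_i, c_i, d_i (finitely many nonzero) satisfy a_i ≡ c_i ≡ 0 (mod 2) and b_i ≡ d_i (mod 2), together with Σ a_i² + 6 Σ b_i² + s Σ c_i² + 6s Σ d_i² = 56 + 12s, Σ a_i b_i + s Σ c_i d_i = 6, Σ a_i c_i + 6 Σ b_i d_i = 12, and Σ a_i d_i + Σ b_i c_i = 2. Then exactly two of the d_i are nonzero, each equal to ±1, c_i = 0 for all i, Σ a_i² = 20, and Σ b_i² = 6. -/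
open scoped Classical


private lemma aux_sq_le_two {x : ℤ} (h : x ^ 2 ≤ 2) : x = -1 ∨ x = 0 ∨ x = 1 := by
  have h2 : x ≤ 1 := by nlinarith
  have h3 : -1 ≤ x := by nlinarith
  omega

private lemma aux_pq {p q : ℤ} (hsum : p + q = 2) (hsq : p ^ 2 + q ^ 2 ≤ 9)
    (hp : p % 2 = 1) : p = 1 ∧ q = 1 := by
  have h0 : 0 ≤ p := by nlinarith
  have h2 : p ≤ 2 := by nlinarith
  omega

private lemma aux_bound14 {s X : ℤ} (hs : 19 ≤ s) (h : s * X ≤ 56 + 12 * s)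
    (hX : 15 ≤ X) : False := by nlinarith

private lemma aux_le2 {s X : ℤ} (hs : 19 ≤ s) (h0 : 0 ≤ X) (h : s * X ≤ 56) :
    X ≤ 2 := by nlinarith

set_option maxHeartbeats 2000000 in
theorem m6_s3_core (s : ℤ) (hs4 : s % 4 = 3) (hsf : Squarefree s)
    (hs19 : 19 ≤ s) (h3 : ¬ (3 ∣ s))
    (a b c d : ℕ → ℤ)
    (hfa : (Function.support a).Finite) (hfb : (Function.support b).Finite)
    (hfc : (Function.support c).Finite) (hfd : (Function.support d).Finite)
    (haeven : ∀ i, 2 ∣ a i) (hceven : ∀ i, 2 ∣ c i)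
    (hpar : ∀ i, b i % 2 = d i % 2)
    (e1 : ∑ᶠ i, (a i) ^ 2 + 6 * ∑ᶠ i, (b i) ^ 2 + s * ∑ᶠ i, (c i) ^ 2
        + 6 * s * ∑ᶠ i, (d i) ^ 2 = 56 + 12 * s)
    (e2 : ∑ᶠ i, a i * b i + s * ∑ᶠ i, c i * d i = 6)
    (e3 : ∑ᶠ i, a i * c i + 6 * ∑ᶠ i, b i * d i = 12)
    (e4 : ∑ᶠ i, a i * d i + ∑ᶠ i, b i * c i = 2) :
    (∃ i j : ℕ, i ≠ j ∧ (d i = 1 ∨ d i = -1) ∧ (d j = 1 ∨ d j = -1) ∧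
        ∀ k, k ≠ i → k ≠ j → d k = 0) ∧
    (∀ i, c i = 0) ∧ ∑ᶠ i, (a i) ^ 2 = 20 ∧ ∑ᶠ i, (b i) ^ 2 = 6 := by
  classical
  set T : Finset ℕ := hfa.toFinset ∪ hfb.toFinset ∪ hfc.toFinset ∪ hfd.toFinset with hTdef
  have hmem : ∀ k, a k ≠ 0 ∨ b k ≠ 0 ∨ c k ≠ 0 ∨ d k ≠ 0 → k ∈ T := by
    intro k hk
    simp only [hTdef, Finset.mem_union, Set.Finite.mem_toFinset, Function.mem_support]
    tauto
  have hout : ∀ k, k ∉ T → a k = 0 ∧ b k = 0 ∧ c k = 0 ∧ d k = 0 := by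
    intro k hk
    by_contra h
    exact hk (hmem k (by tauto))
  have key : ∀ f : ℕ → ℤ, (∀ k, k ∉ T → f k = 0) → ∑ᶠ i, f i = ∑ i ∈ T, f i := by
    intro f hf
    refine finsum_eq_sum_of_support_subset f ?_
    intro k hk
    simp only [Finset.coe_sort_coe, Finset.mem_coe]
    by_contra h
    exact hk (hf k h)
  have ra : ∑ᶠ i, (a i) ^ 2 = ∑ i ∈ T, (a i) ^ 2 := key _ (fun k hk => by rw [(hout k hk).1]; ring)
  have rb : ∑ᶠ i, (b i) ^ 2 = ∑ i ∈ T, (b i) ^ 2 := key _ (fun k hk => by rw [(hout k hk).2.1]; ring)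
  have rc : ∑ᶠ i, (c i) ^ 2 = ∑ i ∈ T, (c i) ^ 2 := key _ (fun k hk => by rw [(hout k hk).2.2.1]; ring)
  have rd : ∑ᶠ i, (d i) ^ 2 = ∑ i ∈ T, (d i) ^ 2 := key _ (fun k hk => by rw [(hout k hk).2.2.2]; ring)
  have rab : ∑ᶠ i, a i * b i = ∑ i ∈ T, a i * b i := key _ (fun k hk => by rw [(hout k hk).1]; ring)
  have rcd : ∑ᶠ i, c i * d i = ∑ i ∈ T, c i * d i := key _ (fun k hk => by rw [(hout k hk).2.2.1]; ring)
  have rac : ∑ᶠ i, a i * c i = ∑ i ∈ T, a i * c i := key _ (fun k hk => by rw [(hout k hk).1]; ring)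
  have rbd : ∑ᶠ i, b i * d i = ∑ i ∈ T, b i * d i := key _ (fun k hk => by rw [(hout k hk).2.1]; ring)
  have rad : ∑ᶠ i, a i * d i = ∑ i ∈ T, a i * d i := key _ (fun k hk => by rw [(hout k hk).1]; ring)
  have rbc : ∑ᶠ i, b i * c i = ∑ i ∈ T, b i * c i := key _ (fun k hk => by rw [(hout k hk).2.1]; ring)
  rw [ra, rb, rc, rd] at e1
  rw [rab, rcd] at e2
  rw [rac, rbd] at e3
  rw [rad, rbc] at e4
  rw [ra, rb]
  set SA := ∑ i ∈ T, (a i) ^ 2 with hSAdef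
  set SB := ∑ i ∈ T, (b i) ^ 2 with hSBdef
  set SC := ∑ i ∈ T, (c i) ^ 2 with hSCdef
  set SD := ∑ i ∈ T, (d i) ^ 2 with hSDdef
  have hSA0 : 0 ≤ SA := Finset.sum_nonneg fun i _ => sq_nonneg _
  have hSB0 : 0 ≤ SB := Finset.sum_nonneg fun i _ => sq_nonneg _
  have hSC0 : 0 ≤ SC := Finset.sum_nonneg fun i _ => sq_nonneg _
  have hSD0 : 0 ≤ SD := Finset.sum_nonneg fun i _ => sq_nonneg _
  have hSA4 : 4 ∣ SA := Finset.dvd_sum fun i _ => by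
    obtain ⟨x, hx⟩ := haeven i; exact ⟨x ^ 2, by rw [hx]; ring⟩
  have hac4 : 4 ∣ ∑ i ∈ T, a i * c i := Finset.dvd_sum fun i _ => by
    obtain ⟨x, hx⟩ := haeven i; obtain ⟨y, hy⟩ := hceven i
    exact ⟨x * y, by rw [hx, hy]; ring⟩
  have hbc4 : 4 ∣ ∑ i ∈ T, b i * c i → True := fun _ => trivial
  -- ∑ bd ≡ SD mod 2
  have hbdSD : 2 ∣ (∑ i ∈ T, b i * d i - SD) := by
    rw [hSDdef, ← Finset.sum_sub_distrib]
    refine Finset.dvd_sum fun i _ => ?_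
    have h2 : (2:ℤ) ∣ b i - d i := Int.ModEq.dvd (hpar i).symm
    obtain ⟨x, hx⟩ := h2
    exact ⟨x * d i, by linear_combination d i * hx⟩
  -- SD not odd
  have hSDeven : SD % 2 = 0 := by
    rcases Int.even_or_odd SD with h | h
    · omega
    · exfalso
      obtain ⟨t, ht⟩ := h
      obtain ⟨m, hm⟩ := hac4
      obtain ⟨k, hk⟩ := hbdSD
      omega
  -- key bound
  have hkey : s * SC + 6 * s * SD ≤ 56 + 12 * s := by linarith
  have hs0 : (0:ℤ) < s := by linarith
  have h14 : SC + 6 * SD ≤ 14 := by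
    by_contra h
    push_neg at h
    exact aux_bound14 hs19 (by linarith : s * (SC + 6 * SD) ≤ 56 + 12 * s) (by omega)
  have hSDle : SD ≤ 2 := by omega
  -- SD ≠ 0
  have hSDne : SD ≠ 0 := by
    intro h0
    have hdz : ∀ k, d k = 0 := by
      intro k
      by_cases hk : k ∈ T
      · have := (Finset.sum_eq_zero_iff_of_nonneg (fun i _ => sq_nonneg (d i))).1 h0 k hk
        exact pow_eq_zero_iff (n := 2) (by norm_num) |>.1 this
      · exact (hout k hk).2.2.2
    have hbev : ∀ k, (2:ℤ) ∣ b k := by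
      intro k
      have := hpar k
      rw [hdz k] at this
      omega
    have had0 : ∑ i ∈ T, a i * d i = 0 := Finset.sum_eq_zero fun i _ => by rw [hdz i]; ring
    have hbc : (4:ℤ) ∣ ∑ i ∈ T, b i * c i := Finset.dvd_sum fun i _ => by
      obtain ⟨x, hx⟩ := hbev i; obtain ⟨y, hy⟩ := hceven i
      exact ⟨x * y, by rw [hx, hy]; ring⟩
    omega
  have hSD2 : SD = 2 := by omega
  -- SC small
  have hSCle : SC ≤ 2 := by
    refine aux_le2 hs19 hSC0 ?_
    have : s * SC + 6 * s * 2 ≤ 56 + 12 * s := by rw [← hSD2]; exact hkey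
    linarith
  -- c = 0 everywhere
  have hc : ∀ k, c k = 0 := by
    intro k
    by_cases hk : k ∈ T
    · have h1 : c k ^ 2 ≤ SC :=
        Finset.single_le_sum (f := fun i => c i ^ 2) (fun i _ => sq_nonneg _) hk
      obtain ⟨x, hx⟩ := hceven k
      have h1' : 4 * x ^ 2 ≤ 2 := by
        have hcx : c k ^ 2 = 4 * x ^ 2 := by rw [hx]; ring
        linarith
      have hx0 : x = 0 := by
        by_contra hne
        have h2 : 0 < x ^ 2 := by positivity
        linarith [Int.lt_iff_add_one_le.mp h2]
      rw [hx, hx0]; ring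
    · exact (hout k hk).2.2.1
  have hSCz : SC = 0 := Finset.sum_eq_zero fun i _ => by rw [hc i]; ring
  -- simplify equations
  have hcd0 : ∑ i ∈ T, c i * d i = 0 := Finset.sum_eq_zero fun i _ => by rw [hc i]; ring
  have hac0 : ∑ i ∈ T, a i * c i = 0 := Finset.sum_eq_zero fun i _ => by rw [hc i]; ring
  have hbc0 : ∑ i ∈ T, b i * c i = 0 := Finset.sum_eq_zero fun i _ => by rw [hc i]; ring
  have E1 : SA + 6 * SB = 56 := by rw [hSCz, hSD2] at e1; linarith
  have E2 : ∑ i ∈ T, a i * b i = 6 := by rw [hcd0] at e2; linarith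
  have E3 : ∑ i ∈ T, b i * d i = 2 := by rw [hac0] at e3; linarith
  have E4 : ∑ i ∈ T, a i * d i = 2 := by rw [hbc0] at e4; linarith
  -- each d in {-1,0,1}
  have hdsmall : ∀ k, d k = -1 ∨ d k = 0 ∨ d k = 1 := by
    intro k
    by_cases hk : k ∈ T
    · have h1 : d k ^ 2 ≤ SD :=
        Finset.single_le_sum (f := fun i => d i ^ 2) (fun i _ => sq_nonneg _) hk
      rw [hSD2] at h1
      exact aux_sq_le_two h1
    · right; left; exact (hout k hk).2.2.2
  -- the support of d has exactly two elements
  set F : Finset ℕ := T.filter (fun k => d k ≠ 0) with hFdef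
  have hFsub : F ⊆ T := Finset.filter_subset _ _
  have hFcard : F.card = 2 := by
    have h1 : ∑ i ∈ F, d i ^ 2 = SD := by
      rw [hSDdef]
      refine Finset.sum_subset hFsub fun x hx hx' => ?_
      simp only [hFdef, Finset.mem_filter, not_and, not_not] at hx'
      rw [hx' hx]; ring
    have h2 : ∑ i ∈ F, d i ^ 2 = F.card := by
      rw [Finset.sum_congr rfl (g := fun _ => (1:ℤ)) fun x hx => ?_]
      · simp
      · simp only [hFdef, Finset.mem_filter] at hx
        rcases hdsmall x with h | h | h <;> simp [h] at hx ⊢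
    rw [h1, hSD2] at h2
    exact_mod_cast h2.symm
  obtain ⟨i, j, hij, hFij⟩ := Finset.card_eq_two.1 hFcard
  have hiF : i ∈ F := by rw [hFij]; simp
  have hjF : j ∈ F := by rw [hFij]; simp
  have hiT : i ∈ T := hFsub hiF
  have hjT : j ∈ T := hFsub hjF
  have hdi : d i = 1 ∨ d i = -1 := by
    have : d i ≠ 0 := by simp only [hFdef, Finset.mem_filter] at hiF; exact hiF.2
    rcases hdsmall i with h | h | h <;> tauto
  have hdj : d j = 1 ∨ d j = -1 := by
    have : d j ≠ 0 := by simp only [hFdef, Finset.mem_filter] at hjF; exact hjF.2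
    rcases hdsmall j with h | h | h <;> tauto
  have hdk : ∀ k, k ≠ i → k ≠ j → d k = 0 := by
    intro k hki hkj
    by_cases hk : k ∈ T
    · by_contra h
      have : k ∈ F := by simp only [hFdef, Finset.mem_filter]; exact ⟨hk, h⟩
      rw [hFij] at this
      simp at this
      tauto
    · exact (hout k hk).2.2.2
  have hsub : ({i, j} : Finset ℕ) ⊆ T := by
    intro x hx
    simp at hx
    rcases hx with h | h <;> subst h <;> assumption
  have hpairsum : ∀ f : ℕ → ℤ, (∀ k, d k = 0 → f k = 0) →
      ∑ k ∈ T, f k = f i + f j := by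
    intro f hf
    rw [← Finset.sum_subset hsub fun x hx hx' => ?_]
    · exact Finset.sum_pair hij
    · simp at hx'
      exact hf x (hdk x hx'.1 hx'.2)
  have had : a i * d i + a j * d j = 2 :=
    ((hpairsum (fun k => a k * d k)
      (fun k hk => by show a k * d k = 0; rw [hk]; ring)).symm.trans E4 :)
  have hbd2 : b i * d i + b j * d j = 2 :=
    ((hpairsum (fun k => b k * d k)
      (fun k hk => by show b k * d k = 0; rw [hk]; ring)).symm.trans E3 :)
  -- b i, b j odd
  have hbiodd : b i % 2 = 1 := by have := hpar i; rcases hdi with h | h <;> omega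
  have hbjodd : b j % 2 = 1 := by have := hpar j; rcases hdj with h | h <;> omega
  -- bound on b i ^2 + b j ^2
  have hSBle : SB ≤ 9 := by omega
  have hbb : b i ^ 2 + b j ^ 2 ≤ SB := by
    have h := Finset.sum_le_sum_of_subset_of_nonneg hsub
      (f := fun k => b k ^ 2) (fun k _ _ => sq_nonneg _)
    rw [Finset.sum_pair hij] at h
    exact h
  -- p q analysis
  have hbi : b i = d i ∧ b j = d j := by
    have hpsq : (b i * d i) ^ 2 = b i ^ 2 := by rcases hdi with h | h <;> rw [h] <;> ring
    have hqsq : (b j * d j) ^ 2 = b j ^ 2 := by rcases hdj with h | h <;> rw [h] <;> ring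
    have hpq9 : (b i * d i) ^ 2 + (b j * d j) ^ 2 ≤ 9 := by omega
    have hpodd : (b i * d i) % 2 = 1 := by rcases hdi with h | h <;> rw [h] <;> omega
    obtain ⟨hp1, hq1⟩ := aux_pq hbd2 hpq9 hpodd
    constructor
    · rcases hdi with h | h <;> rw [h] at hp1 ⊢ <;> omega
    · rcases hdj with h | h <;> rw [h] at hq1 ⊢ <;> omega
  -- rest of b
  have hbisq : b i ^ 2 = 1 := by rcases hdi with h | h <;> rw [hbi.1, h] <;> ring
  have hbjsq : b j ^ 2 = 1 := by rcases hdj with h | h <;> rw [hbi.2, h] <;> ring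
  set R := ∑ k ∈ T \ {i, j}, b k ^ 2 with hRdef
  have hR0 : 0 ≤ R := Finset.sum_nonneg fun k _ => sq_nonneg _
  have hRsplit : R + 2 = SB := by
    have h := Finset.sum_sdiff (f := fun k => b k ^ 2) hsub
    rw [Finset.sum_pair hij, hbisq, hbjsq] at h
    linarith [h]
  have hR4 : 4 ∣ R := by
    refine Finset.dvd_sum fun k hk => ?_
    simp only [Finset.mem_sdiff, Finset.mem_insert, Finset.mem_singleton] at hk
    have hdk0 : d k = 0 := hdk k (fun h => hk.2 (Or.inl h)) (fun h => hk.2 (Or.inr h))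
    have hbev : (2:ℤ) ∣ b k := by have := hpar k; omega
    obtain ⟨x, hx⟩ := hbev
    exact ⟨x ^ 2, by rw [hx]; ring⟩
  have hRne : R ≠ 0 := by
    intro h0
    have hbz : ∀ k ∈ T \ ({i, j} : Finset ℕ), b k = 0 := by
      intro k hk
      have := (Finset.sum_eq_zero_iff_of_nonneg (fun x _ => sq_nonneg (b x))).1 h0 k hk
      exact pow_eq_zero_iff (n := 2) (by norm_num) |>.1 this
    have hab : ∑ k ∈ T, a k * b k = a i * b i + a j * b j := by
      rw [← Finset.sum_subset hsub fun x hx hx' => ?_]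
      · exact Finset.sum_pair hij
      · have : b x = 0 := hbz x (Finset.mem_sdiff.2 ⟨hx, hx'⟩)
        rw [this]; ring
    rw [hbi.1, hbi.2] at hab
    rw [hab] at E2
    omega
  have hRval : R = 4 := by omega
  have hSB6 : SB = 6 := by omega
  have hSA20 : SA = 20 := by omega
  exact ⟨⟨i, j, hij, hdi, hdj, hdk⟩, hc, hSA20, hSB6⟩
end

section
/- Let s ≥ 13. If integers a_i, b_i, c_i (finitely many nonzero) satisfy: all b_i even, a_i ≡ c_i (mod 2), c = (1,1,0,0,...), Σ a_i² + 7 Σ b_i² = 54, Σ b_i² = 4, Σ a_i b_i = 4, a_1 + a_2 = 4 and b_1 + b_2 = 0, then up to reordering {a_1, a_2} = {3, 1}, the unique nonzero b_j satisfies |b_j| = 2 with j ≥ 3, and the multiset of remaining nonzero |a_i| consists of exactly four values equal to 2. -/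
open scoped Classical

private lemma even_sq_ge4 (x : ℤ) (h2 : 2 ∣ x) (h0 : x ≠ 0) : 4 ≤ x ^ 2 := by
  obtain ⟨k, rfl⟩ := h2
  have hk : k ≠ 0 := by rintro rfl; simp at h0
  have h1 : 1 ≤ k ^ 2 := by
    rcases lt_or_gt_of_ne hk with h | h <;> nlinarith
  nlinarith

private lemma even_sq_le12 (x : ℤ) (h2 : 2 ∣ x) (h0 : x ≠ 0) (h : x ^ 2 ≤ 12) :
    x = 2 ∨ x = -2 := by
  obtain ⟨k, rfl⟩ := h2
  have hk : k ≠ 0 := by rintro rfl; simp at h0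
  have h1 : k ≤ 1 := by nlinarith
  have h2' : -1 ≤ k := by nlinarith
  interval_cases k <;> simp_all

theorem m7_s1_final_step (s : ℤ) (hs13 : 13 ≤ s)
    (a b c : ℕ → ℤ)
    (hfa : (Function.support a).Finite) (hfb : (Function.support b).Finite)
    (hfc : (Function.support c).Finite)
    (hbeven : ∀ i, 2 ∣ b i)
    (hpar : ∀ i, a i % 2 = c i % 2)
    (hc0 : c 0 = 1) (hc1 : c 1 = 1) (hcrest : ∀ i, 2 ≤ i → c i = 0)
    (e1 : ∑ᶠ i, (a i) ^ 2 + 7 * ∑ᶠ i, (b i) ^ 2 = 54)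
    (e2 : ∑ᶠ i, (b i) ^ 2 = 4)
    (e3 : ∑ᶠ i, a i * b i = 4)
    (e4 : a 0 + a 1 = 4) (e5 : b 0 + b 1 = 0) :
    ((a 0 = 3 ∧ a 1 = 1) ∨ (a 0 = 1 ∧ a 1 = 3)) ∧
    (∃ j : ℕ, 2 ≤ j ∧ (b j = 2 ∨ b j = -2) ∧ ∀ k, k ≠ j → b k = 0) ∧
    (∃ T : Finset ℕ, T.card = 4 ∧ (∀ i ∈ T, 2 ≤ i ∧ (a i = 2 ∨ a i = -2)) ∧
        ∀ i, 2 ≤ i → i ∉ T → a i = 0) := by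
  classical
  set S : Finset ℕ := hfa.toFinset ∪ hfb.toFinset ∪ {0, 1} with hS
  have haS : ∀ i : ℕ, a i ≠ 0 → i ∈ S := by
    intro i hi
    simp only [hS, Finset.mem_union, Set.Finite.mem_toFinset, Function.mem_support]
    tauto
  have hbS : ∀ i : ℕ, b i ≠ 0 → i ∈ S := by
    intro i hi
    simp only [hS, Finset.mem_union, Set.Finite.mem_toFinset, Function.mem_support]
    tauto
  have h0S : (0 : ℕ) ∈ S := by simp [hS]
  have h1S : (1 : ℕ) ∈ S := by simp [hS]
  -- convert finsums to Finset sums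
  have ea : ∑ᶠ i, (a i) ^ 2 = ∑ i ∈ S, (a i) ^ 2 := by
    apply finsum_eq_finset_sum_of_support_subset
    intro i hi
    apply haS
    intro h; apply hi; simp [Function.mem_support, h]
  have eb : ∑ᶠ i, (b i) ^ 2 = ∑ i ∈ S, (b i) ^ 2 := by
    apply finsum_eq_finset_sum_of_support_subset
    intro i hi
    apply hbS
    intro h; apply hi; simp [Function.mem_support, h]
  have eab : ∑ᶠ i, a i * b i = ∑ i ∈ S, a i * b i := by
    apply finsum_eq_finset_sum_of_support_subset
    intro i hi
    apply hbS
    intro h; apply hi; simp [Function.mem_support, h]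
  rw [ea, eb] at e1
  rw [eb] at e2
  rw [eab] at e3
  have e1' : ∑ i ∈ S, (a i) ^ 2 = 26 := by omega
  -- Step 1: exactly one nonzero b, with b j ^ 2 = 4
  have hbnz : ∃ j ∈ S, b j ≠ 0 := by
    by_contra h
    push_neg at h
    have : ∑ i ∈ S, (b i) ^ 2 = 0 := Finset.sum_eq_zero (fun i hi => by
      rw [h i hi]; ring)
    omega
  obtain ⟨j, hjS, hbj⟩ := hbnz
  have hbj4 : (b j) ^ 2 = 4 ∧ ∀ k ∈ S, k ≠ j → b k = 0 := by
    have hge : 4 ≤ (b j) ^ 2 := even_sq_ge4 _ (hbeven j) hbj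
    have hsplit : ∑ i ∈ S \ {j}, (b i) ^ 2 + ∑ i ∈ {j}, (b i) ^ 2 = ∑ i ∈ S, (b i) ^ 2 :=
      Finset.sum_sdiff (Finset.singleton_subset_iff.2 hjS)
    rw [Finset.sum_singleton] at hsplit
    have hrest_nonneg : 0 ≤ ∑ i ∈ S \ {j}, (b i) ^ 2 :=
      Finset.sum_nonneg (fun i _ => sq_nonneg _)
    have hrest0 : ∑ i ∈ S \ {j}, (b i) ^ 2 = 0 := by omega
    constructor
    · omega
    · intro k hk hkj
      have hk' : k ∈ S \ {j} := Finset.mem_sdiff.2 ⟨hk, by simp [hkj]⟩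
      have := (Finset.sum_eq_zero_iff_of_nonneg (fun i _ => sq_nonneg (b i))).1 hrest0 k hk'
      exact pow_eq_zero_iff (by norm_num) |>.1 this
  obtain ⟨hbj4, hbrest⟩ := hbj4
  have hball : ∀ k, k ≠ j → b k = 0 := by
    intro k hkj
    by_cases hk : k ∈ S
    · exact hbrest k hk hkj
    · by_contra h; exact hk (hbS k h)
  have hbjval : b j = 2 ∨ b j = -2 := by
    have : (b j - 2) * (b j + 2) = 0 := by nlinarith
    rcases mul_eq_zero.1 this with h | h
    · left; omega
    · right; omega
  -- Step 2: a j = ±2 with a j * b j = 4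
  have habj : a j * b j = 4 := by
    rw [← e3]
    symm
    apply Finset.sum_eq_single_of_mem j hjS
    intro k _ hkj
    rw [hball k hkj, mul_zero]
  have haj : a j = 2 ∨ a j = -2 := by
    rcases hbjval with h | h <;> rw [h] at habj
    · left; omega
    · right; omega
  have hajsq : (a j) ^ 2 = 4 := by rcases haj with h | h <;> rw [h] <;> ring
  have hajnz : a j ≠ 0 := by rcases haj with h | h <;> omega
  -- Step 3: j ≥ 2
  have hj2 : 2 ≤ j := by
    by_contra h
    push_neg at h
    interval_cases j
    · have := hball 1 (by norm_num)
      omega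
    · have := hball 0 (by norm_num)
      omega
  -- parity facts
  have ha0odd : a 0 % 2 = 1 := by have := hpar 0; rw [hc0] at this; omega
  have ha1odd : a 1 % 2 = 1 := by have := hpar 1; rw [hc1] at this; omega
  have haeven : ∀ i, 2 ≤ i → 2 ∣ a i := by
    intro i hi
    have := hpar i
    rw [hcrest i hi] at this
    omega
  -- Step 4: {0,1,j} ⊆ S, extract a0²+a1²+aj² ≤ 26
  have h01j : ({0, 1, j} : Finset ℕ) ⊆ S := by
    intro x hx
    simp only [Finset.mem_insert, Finset.mem_singleton] at hx
    rcases hx with rfl | rfl | rfl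
    · exact h0S
    · exact h1S
    · exact hjS
  have hsum01j : ∑ i ∈ ({0, 1, j} : Finset ℕ), (a i) ^ 2 ≤ 26 := by
    rw [← e1']
    exact Finset.sum_le_sum_of_subset_of_nonneg h01j (fun i _ _ => sq_nonneg _)
  have h01jcard : ∑ i ∈ ({0, 1, j} : Finset ℕ), (a i) ^ 2
      = (a 0) ^ 2 + (a 1) ^ 2 + (a j) ^ 2 := by
    rw [Finset.sum_insert (by simp; omega), Finset.sum_insert (by simp; omega),
      Finset.sum_singleton]
    ring
  rw [h01jcard, hajsq] at hsum01j
  -- Step 5: a0, a1 ∈ {1,3}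
  have ha01 : (a 0 = 3 ∧ a 1 = 1) ∨ (a 0 = 1 ∧ a 1 = 3) := by
    have h1 : a 0 ≤ 4 := by nlinarith
    have h2 : 0 ≤ a 0 := by nlinarith
    have : a 0 = 1 ∨ a 0 = 3 := by omega
    rcases this with h | h
    · right; omega
    · left; omega
  have ha01sq : (a 0) ^ 2 + (a 1) ^ 2 = 10 := by
    rcases ha01 with ⟨h1, h2⟩ | ⟨h1, h2⟩ <;> rw [h1, h2] <;> ring
  -- Step 6: the tail
  set T : Finset ℕ := S.filter (fun i => 2 ≤ i ∧ a i ≠ 0) with hT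
  have hjT : j ∈ T := by
    rw [hT, Finset.mem_filter]
    exact ⟨hjS, hj2, hajnz⟩
  have hTsub : T ⊆ S \ {0, 1} := by
    intro x hx
    rw [hT, Finset.mem_filter] at hx
    rw [Finset.mem_sdiff]
    refine ⟨hx.1, ?_⟩
    simp only [Finset.mem_insert, Finset.mem_singleton]
    omega
  have hsdiff : ∑ i ∈ S \ {0, 1}, (a i) ^ 2 + ∑ i ∈ ({0, 1} : Finset ℕ), (a i) ^ 2
      = ∑ i ∈ S, (a i) ^ 2 := by
    apply Finset.sum_sdiff
    intro x hx
    simp only [Finset.mem_insert, Finset.mem_singleton] at hx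
    rcases hx with rfl | rfl
    · exact h0S
    · exact h1S
  have h01sum : ∑ i ∈ ({0, 1} : Finset ℕ), (a i) ^ 2 = 10 := by
    rw [Finset.sum_insert (by norm_num), Finset.sum_singleton]
    exact ha01sq
  have htail : ∑ i ∈ S \ {0, 1}, (a i) ^ 2 = 16 := by omega
  have htailT : ∑ i ∈ T, (a i) ^ 2 = 16 := by
    rw [← htail]
    apply Finset.sum_subset hTsub
    intro x hx hxT
    rw [Finset.mem_sdiff] at hx
    simp only [Finset.mem_insert, Finset.mem_singleton] at hx
    have hx2 : 2 ≤ x := by omega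
    have : a x = 0 := by
      by_contra h
      exact hxT (by rw [hT, Finset.mem_filter]; exact ⟨hx.1, hx2, h⟩)
    rw [this]; ring
  -- each element of T has a i = ±2
  have hT2 : ∀ i ∈ T, a i = 2 ∨ a i = -2 := by
    intro i hi
    rw [hT, Finset.mem_filter] at hi
    by_cases hij : i = j
    · rw [hij]; exact haj
    · have hpair : ({i, j} : Finset ℕ) ⊆ T := by
        intro x hx
        simp only [Finset.mem_insert, Finset.mem_singleton] at hx
        rcases hx with rfl | rfl
        · rw [hT, Finset.mem_filter]; exact hi
        · exact hjT
      have hle : ∑ x ∈ ({i, j} : Finset ℕ), (a x) ^ 2 ≤ 16 := by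
        rw [← htailT]
        exact Finset.sum_le_sum_of_subset_of_nonneg hpair (fun x _ _ => sq_nonneg _)
      rw [Finset.sum_insert (by simp [hij]), Finset.sum_singleton, hajsq] at hle
      exact even_sq_le12 _ (haeven i hi.2.1) hi.2.2 (by omega)
  -- T.card = 4
  have hTcard : T.card = 4 := by
    have : ∑ i ∈ T, (a i) ^ 2 = ∑ i ∈ T, 4 := by
      apply Finset.sum_congr rfl
      intro i hi
      rcases hT2 i hi with h | h <;> rw [h] <;> ring
    rw [this, Finset.sum_const, nsmul_eq_mul] at htailT
    have h4 : (T.card : ℤ) = 4 := by omega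
    exact_mod_cast h4
  refine ⟨ha01, ⟨j, hj2, hbjval, hball⟩, T, hTcard, ?_, ?_⟩
  · intro i hi
    have hi' := hi
    rw [hT, Finset.mem_filter] at hi'
    exact ⟨hi'.2.1, hT2 i hi⟩
  · intro i hi2 hiT
    by_contra h
    exact hiT (by rw [hT, Finset.mem_filter]; exact ⟨haS i h, hi2, h⟩)
end
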